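/- arXiv:2304.00264 — 5 statements merged into one kernel-verified Lean document; each statement's English description precedes it below -/
import Mathlib

section
/- The vorticity ω_ε = -(1-ε²)/(cosh y + ε cos x)² satisfies ω_ε = -((ξ_ε - ε)²/(1-ε²) + η_ε²), where ξ_ε = (ε cosh y + cos x)/(cosh y + ε cos x) and η_ε = √(1-ε²) sin x/(cosh y + ε cos x). -/
/-! The numerator of `ξ_ε - ε` is `ε cosh y + cos x - ε (cosh y + ε cos x) = (1 - ε²) cos x`, so
the two squares add up to `(1 - ε²) (cos² x + sin² x) / (cosh y + ε cos x)²`. -/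

open Real

theorem cosh_add_mul_cos_pos {ε : ℝ} (hε : |ε| < 1) (x y : ℝ) : 0 < cosh y + ε * cos x := by
  have hεcos : |ε * cos x| < 1 :=
    calc |ε * cos x| = |ε| * |cos x| := abs_mul ε (cos x)
      _ ≤ |ε| := mul_le_of_le_one_right (abs_nonneg ε) (abs_cos_le_one x)
      _ < 1 := hε
  linarith [one_le_cosh y, neg_abs_le (ε * cos x)]

theorem div_sub_eq_mul_one_sub_sq_div {K : Type*} [Field K] {ε C c : K} (hD : C + ε * c ≠ 0) :
    (ε * C + c) / (C + ε * c) - ε = c * (1 - ε ^ 2) / (C + ε * c) := by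
  field_simp
  ring

theorem sq_div_one_sub_sq_add_sq_div {K : Type*} [Field K] {ε C c s r : K} (hD : C + ε * c ≠ 0)
    (hr : r ^ 2 = 1 - ε ^ 2) (hcs : c ^ 2 + s ^ 2 = 1) :
    ((ε * C + c) / (C + ε * c) - ε) ^ 2 / (1 - ε ^ 2) + (r * s / (C + ε * c)) ^ 2
      = (1 - ε ^ 2) / (C + ε * c) ^ 2 := by
  rw [div_sub_eq_mul_one_sub_sq_div hD]
  by_cases hε : 1 - ε ^ 2 = 0
  · simp [hε, div_pow, mul_pow, hr]
  · calc (c * (1 - ε ^ 2) / (C + ε * c)) ^ 2 / (1 - ε ^ 2) + (r * s / (C + ε * c)) ^ 2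
          = (1 - ε ^ 2) * (c ^ 2 + s ^ 2) / (C + ε * c) ^ 2 := by
            field_simp
            rw [hr]
            ring
      _ = (1 - ε ^ 2) / (C + ε * c) ^ 2 := by rw [hcs, mul_one]

/-- The vorticity `ω_ε = -(1-ε²)/(cosh y + ε cos x)²` satisfies
`ω_ε = -((ξ_ε - ε)²/(1-ε²) + η_ε²)` where `ξ_ε = (ε cosh y + cos x)/(cosh y + ε cos x)` and
`η_ε = √(1-ε²) sin x/(cosh y + ε cos x)`. -/
theorem stmt3 (ε : ℝ) (hε : ε ∈ Set.Ico (0 : ℝ) 1) (x y : ℝ) :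
    -((1 - ε ^ 2) / (Real.cosh y + ε * Real.cos x) ^ 2)
      = -(((ε * Real.cosh y + Real.cos x) / (Real.cosh y + ε * Real.cos x) - ε) ^ 2 / (1 - ε ^ 2)
          + (Real.sqrt (1 - ε ^ 2) * Real.sin x / (Real.cosh y + ε * Real.cos x)) ^ 2) := by
  have hεabs : |ε| < 1 := abs_lt.mpr ⟨by linarith [hε.1], hε.2⟩
  have hε2 : 0 ≤ 1 - ε ^ 2 := by nlinarith [hε.1, hε.2]
  rw [sq_div_one_sub_sq_add_sq_div (cosh_add_mul_cos_pos hεabs x y).ne' (sq_sqrt hε2)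
    (cos_sq_add_sin_sq x)]
end

section
/- Each of η_ε, γ_ε, ξ_ε is an eigenfunction of -Δ with weight g'(ψ_ε): namely -Δη_ε = g'(ψ_ε) η_ε, -Δγ_ε = g'(ψ_ε) γ_ε, and -Δξ_ε = g'(ψ_ε) ξ_ε, where g'(ψ_ε) = 2(1-ε²)/(cosh y + ε cos x)². -/
/-!
All three functions have the form `N / D` with `D = cosh y + ε cos x` and `N` in the span of
`sin x`, `sinh y` and `ε cosh y + cos x`, so it suffices to treat a general such `N`. Applying the
quotient rule twice in each variable, the equation `-Δ(N/D) = 2(1-ε²) N / D³` becomes a polynomial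
identity in `sin x, cos x, sinh y, cosh y`, which holds modulo `sin² + cos² = 1` and
`cosh² - sinh² = 1`.
-/

noncomputable section

/-- The denominator `cosh y + ε cos x`. -/
def KSden (ε x y : ℝ) : ℝ := Real.cosh y + ε * Real.cos x

/-- The weight `g'(ψ_ε) = 2e^{-2ψ_ε} = 2(1-ε²)/(cosh y + ε cos x)²`. -/
def KSgp (ε x y : ℝ) : ℝ := 2 * (1 - ε ^ 2) / (KSden ε x y) ^ 2

/-- `η_ε = √(1-ε²) sin x/(cosh y + ε cos x)`. -/
def KSeta (ε x y : ℝ) : ℝ := Real.sqrt (1 - ε ^ 2) * Real.sin x / KSden ε x y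

/-- `γ_ε = √(1-ε²) sinh y/(cosh y + ε cos x)`. -/
def KSgam (ε x y : ℝ) : ℝ := Real.sqrt (1 - ε ^ 2) * Real.sinh y / KSden ε x y

/-- `ξ_ε = (ε cosh y + cos x)/(cosh y + ε cos x)`. -/
def KSxi (ε x y : ℝ) : ℝ := (ε * Real.cosh y + Real.cos x) / KSden ε x y

/-- Partial derivative in the first variable. -/
def pdx (f : ℝ → ℝ → ℝ) (x y : ℝ) : ℝ := deriv (fun t => f t y) x

/-- Partial derivative in the second variable. -/
def pdy (f : ℝ → ℝ → ℝ) (x y : ℝ) : ℝ := deriv (fun t => f x t) y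

/-- The Laplacian `Δf = ∂²f/∂x² + ∂²f/∂y²`. -/
def KSlap (f : ℝ → ℝ → ℝ) (x y : ℝ) : ℝ := pdx (pdx f) x y + pdy (pdy f) x y

end

open Real

theorem deriv_deriv_div {N D N' N'' D' D'' : ℝ → ℝ}
    (hN : ∀ t, HasDerivAt N (N' t) t) (hN' : ∀ t, HasDerivAt N' (N'' t) t)
    (hD : ∀ t, HasDerivAt D (D' t) t) (hD' : ∀ t, HasDerivAt D' (D'' t) t)
    (hD0 : ∀ t, D t ≠ 0) (x : ℝ) :
    deriv (deriv (fun t => N t / D t)) x =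
      ((N'' x * D x - N x * D'' x) * D x - 2 * D' x * (N' x * D x - N x * D' x)) / D x ^ 3 := by
  have hfirst : deriv (fun t => N t / D t) = fun t => (N' t * D t - N t * D' t) / D t ^ 2 :=
    funext fun t => ((hN t).div (hD t) (hD0 t)).deriv
  rw [hfirst]
  refine ((((hN' x).mul (hD x)).sub ((hN x).mul (hD' x))).div
    ((hD x).pow 2) (pow_ne_zero 2 (hD0 x))).deriv.trans ?_
  simp only [Pi.mul_apply, Pi.sub_apply, Pi.pow_apply]
  field_simp [hD0 x]
  ring

theorem KSden_pos {ε : ℝ} (hε : |ε| < 1) (x y : ℝ) : 0 < KSden ε x y := by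
  have hcos : |ε * cos x| < 1 := by
    rw [abs_mul]
    exact lt_of_le_of_lt (mul_le_of_le_one_right (abs_nonneg ε) (abs_cos_le_one x)) hε
  unfold KSden
  linarith [one_le_cosh y, neg_abs_le (ε * cos x)]

/-- `η_ε`, `γ_ε` and `ξ_ε` are `KSnum / KSden` for `(a, b, c)` equal to `(√(1-ε²), 0, 0)`,
`(0, √(1-ε²), 0)` and `(0, 0, 1)`. -/
noncomputable def KSnum (ε a b c x y : ℝ) : ℝ := a * sin x + b * sinh y + c * (ε * cosh y + cos x)

noncomputable def KSmode (ε a b c x y : ℝ) : ℝ := KSnum ε a b c x y / KSden ε x y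

section KSmode

variable {ε : ℝ} (hε : |ε| < 1) (a b c x y : ℝ)
include hε

theorem pdx_pdx_KSmode : pdx (pdx (KSmode ε a b c)) x y =
    ((-a * sin x - c * cos x) * KSden ε x y ^ 2 + ε * cos x * KSnum ε a b c x y * KSden ε x y +
      2 * ε * sin x * (a * cos x - c * sin x) * KSden ε x y +
      2 * ε ^ 2 * sin x ^ 2 * KSnum ε a b c x y) / KSden ε x y ^ 3 :=
  (deriv_deriv_div (N := fun t => a * sin t + b * sinh y + c * (ε * cosh y + cos t))
    (D := fun t => cosh y + ε * cos t) (N' := fun t => a * cos t - c * sin t)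
    (N'' := fun t => -a * sin t - c * cos t) (D' := fun t => -ε * sin t)
    (D'' := fun t => -ε * cos t)
    (fun t => ((((hasDerivAt_sin t).const_mul a).add_const (b * sinh y)).add
      (((hasDerivAt_cos t).const_add (ε * cosh y)).const_mul c)).congr_deriv (by ring))
    (fun t => (((hasDerivAt_cos t).const_mul a).sub
      ((hasDerivAt_sin t).const_mul c)).congr_deriv (by ring))
    (fun t => (((hasDerivAt_cos t).const_mul ε).const_add (cosh y)).congr_deriv (by ring))
    (fun t => ((hasDerivAt_sin t).const_mul (-ε)))
    (fun t => (KSden_pos hε t y).ne') x).trans (by simp only [KSnum, KSden]; ring)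

theorem pdy_pdy_KSmode : pdy (pdy (KSmode ε a b c)) x y =
    ((b * sinh y + c * ε * cosh y) * KSden ε x y ^ 2 - cosh y * KSnum ε a b c x y * KSden ε x y -
      2 * sinh y * (b * cosh y + c * ε * sinh y) * KSden ε x y +
      2 * sinh y ^ 2 * KSnum ε a b c x y) / KSden ε x y ^ 3 :=
  (deriv_deriv_div (N := fun t => a * sin x + b * sinh t + c * (ε * cosh t + cos x))
    (D := fun t => cosh t + ε * cos x) (N' := fun t => b * cosh t + c * ε * sinh t)
    (N'' := fun t => b * sinh t + c * ε * cosh t) (D' := sinh) (D'' := cosh)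
    (fun t => ((((hasDerivAt_sinh t).const_mul b).const_add (a * sin x)).add
      ((((hasDerivAt_cosh t).const_mul ε).add_const (cos x)).const_mul c)).congr_deriv (by ring))
    (fun t => ((hasDerivAt_cosh t).const_mul b).add ((hasDerivAt_sinh t).const_mul (c * ε)))
    (fun t => (hasDerivAt_cosh t).add_const _) hasDerivAt_sinh
    (fun t => (KSden_pos hε x t).ne') y).trans (by simp only [KSnum, KSden]; ring)

theorem neg_KSlap_KSmode :
    -KSlap (KSmode ε a b c) x y = KSgp ε x y * KSmode ε a b c x y := by
  have hD0 := (KSden_pos hε x y).ne'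
  have hnum : (-a * sin x - c * cos x) * KSden ε x y ^ 2 +
      ε * cos x * KSnum ε a b c x y * KSden ε x y +
      2 * ε * sin x * (a * cos x - c * sin x) * KSden ε x y +
      2 * ε ^ 2 * sin x ^ 2 * KSnum ε a b c x y +
      ((b * sinh y + c * ε * cosh y) * KSden ε x y ^ 2 - cosh y * KSnum ε a b c x y * KSden ε x y -
      2 * sinh y * (b * cosh y + c * ε * sinh y) * KSden ε x y +
      2 * sinh y ^ 2 * KSnum ε a b c x y) = -(2 * (1 - ε ^ 2) * KSnum ε a b c x y) := by
    simp only [KSnum, KSden]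
    linear_combination
      (2 * ε ^ 2 * (a * sin x + b * sinh y + c * (ε * cosh y + cos x)) -
        2 * ε * c * (cosh y + ε * cos x)) * sin_sq_add_cos_sq x +
      (2 * ε * c * (cosh y + ε * cos x) -
        2 * (a * sin x + b * sinh y + c * (ε * cosh y + cos x))) * cosh_sq_sub_sinh_sq y
  rw [KSlap, pdx_pdx_KSmode hε, pdy_pdy_KSmode hε, ← add_div, hnum, KSgp, KSmode]
  field_simp

end KSmode

/-- Each of `η_ε, γ_ε, ξ_ε` is an eigenfunction of `-Δ` with weight `g'(ψ_ε)`: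
`-Δη_ε = g'(ψ_ε) η_ε`, `-Δγ_ε = g'(ψ_ε) γ_ε`, `-Δξ_ε = g'(ψ_ε) ξ_ε`. -/
theorem stmt4 (ε : ℝ) (hε : ε ∈ Set.Ico (0 : ℝ) 1) (x y : ℝ) :
    -KSlap (KSeta ε) x y = KSgp ε x y * KSeta ε x y ∧
    -KSlap (KSgam ε) x y = KSgp ε x y * KSgam ε x y ∧
    -KSlap (KSxi ε) x y = KSgp ε x y * KSxi ε x y := by
  have habs : |ε| < 1 := abs_lt.mpr ⟨by linarith [hε.1], hε.2⟩
  have heta : KSeta ε = KSmode ε √(1 - ε ^ 2) 0 0 := by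
    ext x y; simp [KSeta, KSmode, KSnum]
  have hgam : KSgam ε = KSmode ε 0 √(1 - ε ^ 2) 0 := by
    ext x y; simp [KSgam, KSmode, KSnum]
  have hxi : KSxi ε = KSmode ε 0 0 1 := by
    ext x y; simp [KSxi, KSmode, KSnum]
  rw [heta, hgam, hxi]
  exact ⟨neg_KSlap_KSmode habs .., neg_KSlap_KSmode habs .., neg_KSlap_KSmode habs ..⟩
end

section
/- For every ε ∈ [0,1), ∬_{T_{2π}×ℝ} g'(ψ_ε) dx dy = 8π, where g'(ψ_ε) = 2(1-ε²)/(cosh y + ε cos x)² and x ranges over [0,2π], y over ℝ. -/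
/-!
For `|b| < a` the inner integral is elementary:
`∫₀^{2π} dx / (a + b cos x)² = 2π a / (a² - b²)^{3/2}`.
With `a = cosh y`, `b = ε` and `cosh² y - ε² = sinh² y + (1 - ε²)`, the outer integrand is the
derivative of `4π sinh y / √(sinh² y + 1 - ε²)`, which increases from `-4π` to `4π`.
-/

open MeasureTheory Real Filter Topology Set

theorem add_mul_cos_pos {a b : ℝ} (h : |b| < a) (x : ℝ) : 0 < a + b * cos x := by
  have : |b * cos x| ≤ |b| := by
    rw [abs_mul]; exact mul_le_of_le_one_right (abs_nonneg b) (abs_cos_le_one x)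
  linarith [neg_abs_le (b * cos x)]

theorem sq_sub_sq_pos_of_abs_lt {a b : ℝ} (h : |b| < a) : 0 < a ^ 2 - b ^ 2 :=
  sub_pos.2 (sq_lt_sq.2 (h.trans_le (le_abs_self a)))

-- Unlike the substitution `u = tan (x / 2)`, this antiderivative of `√(a² - b²) / (a + b cos x)`
-- is continuous on all of `ℝ`.
theorem hasDerivAt_sub_two_mul_arctan {a b : ℝ} (h : |b| < a) (x : ℝ) :
    HasDerivAt (fun x ↦ x - 2 * arctan (b * sin x / (a + √(a ^ 2 - b ^ 2) + b * cos x)))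
      (√(a ^ 2 - b ^ 2) / (a + b * cos x)) x := by
  set s := √(a ^ 2 - b ^ 2)
  have hs : 0 < s := sqrt_pos.2 (sq_sub_sq_pos_of_abs_lt h)
  have hs2 : s ^ 2 = a ^ 2 - b ^ 2 := sq_sqrt (sq_sub_sq_pos_of_abs_lt h).le
  have hd := add_mul_cos_pos h x
  have hD : 0 < a + s + b * cos x := by linarith
  have hnum := (hasDerivAt_sin x).const_mul b
  have hden := ((hasDerivAt_cos x).const_mul b).const_add (a + s)
  refine ((hasDerivAt_id' x).sub ((hnum.div hden hD.ne').arctan.const_mul 2)).congr_deriv ?_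
  simp only [Pi.div_apply]
  field_simp
  linear_combination -(a + s + b * cos x) * (hs2 + b ^ 2 * sin_sq_add_cos_sq x)

theorem integral_one_div_add_mul_cos_sq {a b : ℝ} (h : |b| < a) :
    ∫ x in 0..2 * π, 1 / (a + b * cos x) ^ 2
      = 2 * π * a / ((a ^ 2 - b ^ 2) * √(a ^ 2 - b ^ 2)) := by
  set s := √(a ^ 2 - b ^ 2)
  have hA := sq_sub_sq_pos_of_abs_lt h
  have hs : 0 < s := sqrt_pos.2 hA
  have hd := add_mul_cos_pos h
  have hF : ∀ x, HasDerivAt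
      (fun x ↦ (a / s * (x - 2 * arctan (b * sin x / (a + s + b * cos x)))
        - b * sin x / (a + b * cos x)) / (a ^ 2 - b ^ 2))
      (1 / (a + b * cos x) ^ 2) x := by
    intro x
    have hq := ((hasDerivAt_sin x).const_mul b).div
      (((hasDerivAt_cos x).const_mul b).const_add a) (hd x).ne'
    refine ((((hasDerivAt_sub_two_mul_arctan h x).const_mul (a / s)).sub hq).div_const
      (a ^ 2 - b ^ 2)).congr_deriv ?_
    have hdx := hd x
    field_simp
    linear_combination -s * b ^ 2 * sin_sq_add_cos_sq x
  have hcont : Continuous fun x ↦ 1 / (a + b * cos x) ^ 2 :=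
    continuous_const.div (by fun_prop) fun x ↦ pow_ne_zero 2 (hd x).ne'
  rw [intervalIntegral.integral_eq_sub_of_hasDerivAt (fun x _ ↦ hF x)
    (hcont.intervalIntegrable _ _)]
  field_simp
  simp

theorem integrable_of_hasDerivAt_of_nonneg_of_tendsto {f f' : ℝ → ℝ} {m n : ℝ}
    (hderiv : ∀ x, HasDerivAt f (f' x) x) (hf' : ∀ x, 0 ≤ f' x)
    (hbot : Tendsto f atBot (𝓝 m)) (htop : Tendsto f atTop (𝓝 n)) : Integrable f' := by
  have hIoi : IntegrableOn f' (Ioi 0) :=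
    integrableOn_Ioi_deriv_of_nonneg' (fun x _ ↦ hderiv x) (fun x _ ↦ hf' x) htop
  have hIoi_neg : IntegrableOn (fun x ↦ f' (-x)) (Ioi 0) := by
    refine integrableOn_Ioi_deriv_of_nonneg' (g := fun x ↦ -f (-x)) (fun x _ ↦ ?_)
      (fun x _ ↦ hf' (-x)) (hbot.comp tendsto_neg_atTop_atBot).neg
    have hcomp := ((hderiv (-x)).comp x (hasDerivAt_neg x)).neg
    simp only [neg_neg, mul_neg, mul_one] at hcomp
    exact hcomp
  have hIio : IntegrableOn f' (Iio 0) := by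
    rw [← (Measure.measurePreserving_neg (volume : Measure ℝ)).integrableOn_comp_preimage
      (Homeomorph.neg ℝ).measurableEmbedding]
    simpa [Function.comp_def] using hIoi_neg
  rw [← integrableOn_univ, ← Iio_union_Ici (a := (0 : ℝ)), integrableOn_union,
    integrableOn_Ici_iff_integrableOn_Ioi]
  exact ⟨hIio, hIoi⟩

theorem integral_of_hasDerivAt_of_nonneg_of_tendsto {f f' : ℝ → ℝ} {m n : ℝ}
    (hderiv : ∀ x, HasDerivAt f (f' x) x) (hf' : ∀ x, 0 ≤ f' x)
    (hbot : Tendsto f atBot (𝓝 m)) (htop : Tendsto f atTop (𝓝 n)) : ∫ x, f' x = n - m :=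
  integral_of_hasDerivAt_of_tendsto hderiv
    (integrable_of_hasDerivAt_of_nonneg_of_tendsto hderiv hf' hbot htop) hbot htop

theorem tendsto_sinh_atTop : Tendsto sinh atTop atTop :=
  tendsto_atTop_mono' _ (eventually_ge_atTop 0 |>.mono fun _ ↦ self_le_sinh_iff.2) tendsto_id

theorem tendsto_sinh_atBot : Tendsto sinh atBot atBot :=
  tendsto_atBot_mono' _ (eventually_le_atBot 0 |>.mono fun _ ↦ sinh_le_self_iff.2) tendsto_id

theorem hasDerivAt_div_sqrt_sq_add {c : ℝ} (hc : 0 < c) (t : ℝ) :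
    HasDerivAt (fun t ↦ t / √(t ^ 2 + c)) (c / ((t ^ 2 + c) * √(t ^ 2 + c))) t := by
  have hq : 0 < t ^ 2 + c := by positivity
  have hsq := ((hasDerivAt_pow 2 t).add_const c).sqrt hq.ne'
  refine ((hasDerivAt_id' t).div hsq (sqrt_pos.2 hq).ne').congr_deriv ?_
  have hr : √(t ^ 2 + c) ^ 2 = t ^ 2 + c := sq_sqrt hq.le
  norm_num
  field_simp
  linear_combination t ^ 2 * hr

theorem tendsto_div_sqrt_sq_add_atTop (c : ℝ) :
    Tendsto (fun t ↦ t / √(t ^ 2 + c)) atTop (𝓝 1) := by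
  have h0 : Tendsto (fun t : ℝ ↦ 1 + c * t⁻¹ ^ 2) atTop (𝓝 1) := by
    simpa using (tendsto_inv_atTop_zero.pow 2).const_mul c |>.const_add 1
  have h1 : Tendsto (fun t : ℝ ↦ (√(1 + c * t⁻¹ ^ 2))⁻¹) atTop (𝓝 1) := by
    simpa using ((continuous_sqrt.tendsto 1).comp h0).inv₀ (by simp)
  refine h1.congr' ?_
  filter_upwards [eventually_gt_atTop 0] with t ht
  rw [show t ^ 2 + c = t ^ 2 * (1 + c * t⁻¹ ^ 2) by field_simp, sqrt_mul (sq_nonneg t),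
    sqrt_sq ht.le]
  field_simp

theorem tendsto_div_sqrt_sq_add_atBot (c : ℝ) :
    Tendsto (fun t ↦ t / √(t ^ 2 + c)) atBot (𝓝 (-1)) := by
  refine ((tendsto_div_sqrt_sq_add_atTop c).comp tendsto_neg_atBot_atTop).neg.congr fun t ↦ ?_
  simp [neg_div]

/-- For every `ε ∈ [0,1)`, `∬_{T_{2π}×ℝ} g'(ψ_ε) dx dy = 8π`, where
`g'(ψ_ε) = 2(1-ε²)/(cosh y + ε cos x)²`, `x` ranging over `[0,2π]` and `y` over `ℝ`. -/
theorem stmt9 (ε : ℝ) (hε : ε ∈ Set.Ico (0 : ℝ) 1) :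
    (∫ y : ℝ, ∫ x in (0 : ℝ)..(2 * Real.pi),
        2 * (1 - ε ^ 2) / (Real.cosh y + ε * Real.cos x) ^ 2)
      = 8 * Real.pi := by
  obtain ⟨hε0, hε1⟩ := hε
  have hc : 0 < 1 - ε ^ 2 := by nlinarith
  have hε_lt_cosh : ∀ y, |ε| < cosh y := fun y ↦ by
    rw [abs_of_nonneg hε0]; linarith [one_le_cosh y]
  have hderiv : ∀ y, HasDerivAt (fun y ↦ 4 * π * (sinh y / √(sinh y ^ 2 + (1 - ε ^ 2))))
      (∫ x in 0..2 * π, 2 * (1 - ε ^ 2) / (cosh y + ε * cos x) ^ 2) y := fun y ↦ by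
    simp_rw [div_eq_mul_one_div (2 * (1 - ε ^ 2)), intervalIntegral.integral_const_mul,
      integral_one_div_add_mul_cos_sq (hε_lt_cosh y), cosh_sq, add_sub_assoc]
    exact (((hasDerivAt_div_sqrt_sq_add hc _).comp y (hasDerivAt_sinh y)).const_mul _).congr_deriv
      (by ring)
  have hnonneg : ∀ y, 0 ≤ ∫ x in 0..2 * π, 2 * (1 - ε ^ 2) / (cosh y + ε * cos x) ^ 2 :=
    fun y ↦ intervalIntegral.integral_nonneg (by positivity) fun x _ ↦ by positivity
  rw [integral_of_hasDerivAt_of_nonneg_of_tendsto hderiv hnonneg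
    (((tendsto_div_sqrt_sq_add_atBot _).comp tendsto_sinh_atBot).const_mul _)
    (((tendsto_div_sqrt_sq_add_atTop _).comp tendsto_sinh_atTop).const_mul _)]
  ring
end

section
/- Fix α ∈ (0, 1/2], k ∈ ℤ, n ≥ 0. Set β = |k+α| + 1/2 and λ = ½(n + |k+α|)(n + |k+α| + 1). Then φ(γ) = (1-γ²)^{|k+α|/2} C_n^β(γ) solves -((1-γ²)φ')' + (k+α)²/(1-γ²) · φ = 2λφ on (-1,1). -/
/-!
Writing `w = 1 - γ²`, one has `w (w^p f)' = w^p (w f' - 2p γ f)`. Applying this twice shows that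
conjugation by `w^(a/2)` turns `-(w φ')' + a²/w φ` into `-(w C'' - 2(a+1) γ C') + a(a+1) C`; the
`a²/w` term and the `-a² γ²/w` coming from differentiating `w^(a/2)` twice add up to `a²`. With
`a = |k+α|` the Gegenbauer equation replaces the bracket by `n(n+2a+1) C`, and
`n(n+2a+1) + a(a+1) = (n+a)(n+a+1)`.
-/

open Filter Topology

theorem hasDerivAt_one_sub_sq (s : ℝ) : HasDerivAt (fun t : ℝ => 1 - t ^ 2) (-(2 * s)) s := by
  simpa using (hasDerivAt_pow 2 s).const_sub 1

theorem hasDerivAt_one_sub_sq_rpow_mul {f : ℝ → ℝ} {f' s : ℝ} (p : ℝ)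
    (hf : HasDerivAt f f' s) (hs : 1 - s ^ 2 ≠ 0) :
    HasDerivAt (fun t => (1 - t ^ 2) ^ p * f t)
      ((1 - s ^ 2) ^ (p - 1) * ((1 - s ^ 2) * f' - 2 * p * s * f s)) s := by
  refine (((hasDerivAt_one_sub_sq s).rpow_const (p := p) (Or.inl hs)).mul hf).congr_deriv ?_
  rw [show (1 - s ^ 2) ^ p = (1 - s ^ 2) ^ (p - 1) * (1 - s ^ 2) by
    rw [← Real.rpow_add_one hs, sub_add_cancel]]
  ring

theorem one_sub_sq_mul_deriv_rpow_mul {f : ℝ → ℝ} {s : ℝ} (p : ℝ)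
    (hf : DifferentiableAt ℝ f s) (hs : 1 - s ^ 2 ≠ 0) :
    (1 - s ^ 2) * deriv (fun t => (1 - t ^ 2) ^ p * f t) s
      = (1 - s ^ 2) ^ p * ((1 - s ^ 2) * deriv f s - 2 * p * s * f s) := by
  rw [(hasDerivAt_one_sub_sq_rpow_mul p hf.hasDerivAt hs).deriv, ← mul_assoc,
    mul_comm (1 - s ^ 2), ← Real.rpow_add_one hs, sub_add_cancel]

theorem neg_deriv_one_sub_sq_mul_deriv_rpow_mul {C : ℝ → ℝ} {γ : ℝ} (a : ℝ)
    (hC : ∀ᶠ t in 𝓝 γ, DifferentiableAt ℝ C t) (hC' : DifferentiableAt ℝ (deriv C) γ)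
    (hγ : 1 - γ ^ 2 ≠ 0) :
    -(deriv (fun t => (1 - t ^ 2) * deriv (fun s => (1 - s ^ 2) ^ (a / 2) * C s) t) γ)
        + a ^ 2 / (1 - γ ^ 2) * ((1 - γ ^ 2) ^ (a / 2) * C γ)
      = (1 - γ ^ 2) ^ (a / 2) * (-((1 - γ ^ 2) * deriv (deriv C) γ
          - 2 * (a + 1) * γ * deriv C γ) + a * (a + 1) * C γ) := by
  have hw : ∀ᶠ t in 𝓝 γ, 1 - t ^ 2 ≠ 0 :=
    (hasDerivAt_one_sub_sq γ).continuousAt.eventually_ne hγ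
  have hflux : (fun t => (1 - t ^ 2) * deriv (fun s => (1 - s ^ 2) ^ (a / 2) * C s) t)
      =ᶠ[𝓝 γ] fun t => (1 - t ^ 2) ^ (a / 2) * ((1 - t ^ 2) * deriv C t - a * t * C t) := by
    filter_upwards [hC, hw] with t hCt hwt
    rw [one_sub_sq_mul_deriv_rpow_mul _ hCt hwt]
    ring_nf
  have hinner : HasDerivAt (fun t => (1 - t ^ 2) * deriv C t - a * t * C t)
      (-(2 * γ) * deriv C γ + (1 - γ ^ 2) * deriv (deriv C) γ
        - a * (C γ + γ * deriv C γ)) γ :=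
    (((hasDerivAt_one_sub_sq γ).mul hC'.hasDerivAt).sub
      (((hasDerivAt_id' γ).const_mul a).mul hC.self_of_nhds.hasDerivAt)).congr_deriv (by ring)
  rw [hflux.deriv_eq, (hasDerivAt_one_sub_sq_rpow_mul (a / 2) hinner hγ).deriv,
    show (1 - γ ^ 2) ^ (a / 2) = (1 - γ ^ 2) ^ (a / 2 - 1) * (1 - γ ^ 2) by
      rw [← Real.rpow_add_one hγ, sub_add_cancel]]
  field_simp
  ring

theorem stmt13_general (α : ℝ) (k : ℤ) (n : ℕ)
    (C : ℝ → ℝ) (hC : ContDiff ℝ 2 C)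
    (hode : ∀ γ ∈ Set.Ioo (-1 : ℝ) 1,
      (1 - γ ^ 2) * deriv (deriv C) γ
          - (2 * (|(k : ℝ) + α| + 1 / 2) + 1) * γ * deriv C γ
          + (n : ℝ) * ((n : ℝ) + 2 * (|(k : ℝ) + α| + 1 / 2)) * C γ = 0) :
    ∀ γ ∈ Set.Ioo (-1 : ℝ) 1,
      -(deriv (fun t => (1 - t ^ 2) *
            deriv (fun s => (1 - s ^ 2) ^ (|(k : ℝ) + α| / 2) * C s) t) γ)
          + ((k : ℝ) + α) ^ 2 / (1 - γ ^ 2) * ((1 - γ ^ 2) ^ (|(k : ℝ) + α| / 2) * C γ)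
        = 2 * ((1 / 2) * ((n : ℝ) + |(k : ℝ) + α|) * ((n : ℝ) + |(k : ℝ) + α| + 1)) *
            ((1 - γ ^ 2) ^ (|(k : ℝ) + α| / 2) * C γ) := by
  intro γ hγ
  have hw : 1 - γ ^ 2 ≠ 0 := by nlinarith [hγ.1, hγ.2]
  have hCd : ∀ᶠ t in 𝓝 γ, DifferentiableAt ℝ C t :=
    Eventually.of_forall (hC.differentiable two_ne_zero)
  rw [← sq_abs ((k : ℝ) + α),
    neg_deriv_one_sub_sq_mul_deriv_rpow_mul _ hCd (hC.differentiable_deriv_two γ) hw]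
  linear_combination (-(1 - γ ^ 2) ^ (|(k : ℝ) + α| / 2)) * hode γ hγ

/-- Let `α ∈ (0,1/2]`, `k ∈ ℤ`, `n ≥ 0`, `β = |k+α| + 1/2`,
`λ = ½(n + |k+α|)(n + |k+α| + 1)`, and let `C_n^β` be the Gegenbauer polynomial of degree `n`
with parameter `β`, i.e. a (smooth) polynomial solution of
`(1-γ²)y'' - (2β+1)γ y' + n(n+2β)y = 0`. Then `φ(γ) = (1-γ²)^{|k+α|/2} C_n^β(γ)` solves
`-((1-γ²)φ')' + (k+α)²/(1-γ²) · φ = 2λφ` on `(-1,1)`. -/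
theorem stmt13 (α : ℝ) (hα : α ∈ Set.Ioc (0 : ℝ) (1 / 2)) (k : ℤ) (n : ℕ)
    (C : ℝ → ℝ) (hC : ContDiff ℝ 2 C)
    (hode : ∀ γ ∈ Set.Ioo (-1 : ℝ) 1,
      (1 - γ ^ 2) * deriv (deriv C) γ
          - (2 * (|(k : ℝ) + α| + 1 / 2) + 1) * γ * deriv C γ
          + (n : ℝ) * ((n : ℝ) + 2 * (|(k : ℝ) + α| + 1 / 2)) * C γ = 0) :
    ∀ γ ∈ Set.Ioo (-1 : ℝ) 1,
      -(deriv (fun t => (1 - t ^ 2) *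
            deriv (fun s => (1 - s ^ 2) ^ (|(k : ℝ) + α| / 2) * C s) t) γ)
          + ((k : ℝ) + α) ^ 2 / (1 - γ ^ 2) * ((1 - γ ^ 2) ^ (|(k : ℝ) + α| / 2) * C γ)
        = 2 * ((1 / 2) * ((n : ℝ) + |(k : ℝ) + α|) * ((n : ℝ) + |(k : ℝ) + α| + 1)) *
            ((1 - γ ^ 2) ^ (|(k : ℝ) + α| / 2) * C γ) :=
  stmt13_general α k n C hC hode
end

section
/- For 0 ≤ ε₁ < ε₂ < 1, the ellipse Γ_{ε₂} = {(ξ,η) : (ξ-ε₂)²/(1-ε₂)² + η²/((1-ε₂)/(1+ε₂)) = 1} is enclosed by the ellipse Γ_{ε₁} = {(ξ-ε₁)²/(1-ε₁)² + η²/((1-ε₁)/(1+ε₁)) = 1}: every point of Γ_{ε₂} satisfies (ξ-ε₁)²/(1-ε₁)² + η²/((1-ε₁)/(1+ε₁)) ≤ 1. Moreover for every ε ∈ [0,1) the ellipse Γ_ε is contained in the closed unit disk and passes through (1,0). -/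
/-!
Clearing denominators, `(ξ, η)` lies on `Γ_ε` iff `η² (1 - ε²) = (1 - ξ)(1 + ξ - 2ε)`, and inside
it iff `≤` holds. On `Γ_ε` this forces `ξ ≤ 1`, and for `ξ ≤ 1` the bound
`(1 - ξ)(1 + ξ - 2ε) / (1 - ε²)` on `η²` decreases in `ε`, so the ellipses are nested. The unit
circle is `Γ_0`.
-/

/-- `Γ_ε` is the level set `ellipseForm ε = 1`. -/
noncomputable def ellipseForm (ε ξ η : ℝ) : ℝ :=
  (ξ - ε) ^ 2 / (1 - ε) ^ 2 + η ^ 2 / ((1 - ε) / (1 + ε))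

section ellipseForm

variable {ε ξ η : ℝ}

lemma ellipseForm_eq (hε : ε ≠ 1) :
    ellipseForm ε ξ η =
      1 + (η ^ 2 * (1 - ε ^ 2) - (1 - ξ) * (1 + ξ - 2 * ε)) / (1 - ε) ^ 2 := by
  have hε' : 1 - ε ≠ 0 := sub_ne_zero.mpr hε.symm
  rw [ellipseForm, div_div_eq_mul_div]
  field_simp
  ring

lemma ellipseForm_le_one_iff (hε : ε ≠ 1) :
    ellipseForm ε ξ η ≤ 1 ↔ η ^ 2 * (1 - ε ^ 2) ≤ (1 - ξ) * (1 + ξ - 2 * ε) := by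
  have hpos : 0 < (1 - ε) ^ 2 := pow_two_pos_of_ne_zero (sub_ne_zero.mpr hε.symm)
  rw [ellipseForm_eq hε, add_le_iff_nonpos_right, div_le_iff₀ hpos, zero_mul, sub_nonpos]

lemma ellipseForm_eq_one_iff (hε : ε ≠ 1) :
    ellipseForm ε ξ η = 1 ↔ η ^ 2 * (1 - ε ^ 2) = (1 - ξ) * (1 + ξ - 2 * ε) := by
  have hne : (1 - ε) ^ 2 ≠ 0 := pow_ne_zero 2 (sub_ne_zero.mpr hε.symm)
  rw [ellipseForm_eq hε, add_eq_left, div_eq_zero_iff, or_iff_left hne, sub_eq_zero]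

lemma le_one_of_ellipseForm_eq_one (h₀ : 0 ≤ ε) (h₁ : ε < 1) (h : ellipseForm ε ξ η = 1) :
    ξ ≤ 1 := by
  rw [ellipseForm_eq_one_iff h₁.ne] at h
  by_contra! hξ
  have : 0 ≤ η ^ 2 * (1 - ε ^ 2) := mul_nonneg (sq_nonneg η) (by nlinarith)
  nlinarith

lemma ellipseForm_le_one_of_le {ε₁ ε₂ : ℝ} (h₀ : 0 ≤ ε₁) (h₁₂ : ε₁ ≤ ε₂) (h₂ : ε₂ < 1)
    (h : ellipseForm ε₂ ξ η = 1) : ellipseForm ε₁ ξ η ≤ 1 := by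
  have hξ : ξ ≤ 1 := le_one_of_ellipseForm_eq_one (h₀.trans h₁₂) h₂ h
  rw [ellipseForm_eq_one_iff h₂.ne] at h
  rw [ellipseForm_le_one_iff (h₁₂.trans_lt h₂).ne]
  have hpos : 0 < 1 - ε₂ ^ 2 := by nlinarith
  refine le_of_mul_le_mul_right ?_ hpos
  have hgap : 0 ≤ (1 - ξ) * (ε₂ - ε₁) * ((ε₁ + ε₂) * (1 - ξ) + 2 * (1 - ε₁) * (1 - ε₂)) := by
    have : 0 ≤ (ε₁ + ε₂) * (1 - ξ) := mul_nonneg (by linarith) (by linarith)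
    have : 0 < (1 - ε₁) * (1 - ε₂) := mul_pos (by linarith) (by linarith)
    exact mul_nonneg (mul_nonneg (by linarith) (by linarith)) (by linarith)
  calc η ^ 2 * (1 - ε₁ ^ 2) * (1 - ε₂ ^ 2)
      = (1 - ξ) * (1 + ξ - 2 * ε₂) * (1 - ε₁ ^ 2) := by rw [← h]; ring
    _ ≤ (1 - ξ) * (1 + ξ - 2 * ε₁) * (1 - ε₂ ^ 2) := by linear_combination hgap

lemma ellipseForm_zero : ellipseForm 0 ξ η = ξ ^ 2 + η ^ 2 := by
  simp [ellipseForm]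

lemma ellipseForm_one_zero (hε : ε ≠ 1) : ellipseForm ε 1 0 = 1 :=
  (ellipseForm_eq_one_iff hε).mpr (by ring)

end ellipseForm

/-- For `0 ≤ ε₁ < ε₂ < 1`, the ellipse
`Γ_{ε₂} = {(ξ,η) : (ξ-ε₂)²/(1-ε₂)² + η²/((1-ε₂)/(1+ε₂)) = 1}` is enclosed by `Γ_{ε₁}`:
every point of `Γ_{ε₂}` satisfies `(ξ-ε₁)²/(1-ε₁)² + η²/((1-ε₁)/(1+ε₁)) ≤ 1`. Moreover, for
every `ε ∈ [0,1)`, `Γ_ε` is contained in the closed unit disk and passes through `(1,0)`. -/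
theorem stmt16 :
    (∀ ε₁ ε₂ : ℝ, 0 ≤ ε₁ → ε₁ < ε₂ → ε₂ < 1 → ∀ ξ η : ℝ,
      (ξ - ε₂) ^ 2 / (1 - ε₂) ^ 2 + η ^ 2 / ((1 - ε₂) / (1 + ε₂)) = 1 →
      (ξ - ε₁) ^ 2 / (1 - ε₁) ^ 2 + η ^ 2 / ((1 - ε₁) / (1 + ε₁)) ≤ 1) ∧
    (∀ ε ∈ Set.Ico (0 : ℝ) 1, ∀ ξ η : ℝ,
      (ξ - ε) ^ 2 / (1 - ε) ^ 2 + η ^ 2 / ((1 - ε) / (1 + ε)) = 1 → ξ ^ 2 + η ^ 2 ≤ 1) ∧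
    (∀ ε ∈ Set.Ico (0 : ℝ) 1,
      ((1 : ℝ) - ε) ^ 2 / (1 - ε) ^ 2 + (0 : ℝ) ^ 2 / ((1 - ε) / (1 + ε)) = 1) := by
  refine ⟨fun ε₁ ε₂ h₀ h₁₂ h₂ ξ η h => ellipseForm_le_one_of_le h₀ h₁₂.le h₂ h,
    fun ε hε ξ η h => ?_, fun ε hε => ellipseForm_one_zero hε.2.ne⟩
  rw [← ellipseForm_zero]
  exact ellipseForm_le_one_of_le le_rfl hε.1 hε.2 h
end
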